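/- Let G = (V,E) be a finite connected simple graph with at least one edge, let μ* be an MEO-optimal pmf on Γ_G, let η* = η_{μ*}, let K = max_{e∈E} η*(e), and let E* = {e ∈ E : η*(e) = K}. Then there exists a feasible partition P* of G such that: (1) E* = E_{P*}; (2) every spanning tree γ with μ*(γ) > 0 satisfies |γ ∩ E_{P*}| = k_{P*} − 1; (3) K = (k_{P*} − 1)/|E_{P*}|; and (4) |E_{P*}|/(k_{P*} − 1) ≤ |E_P|/(k_P − 1) for every feasible partition P of G. -/

import Mathlib

set_option linter.unusedSectionVars false
set_option maxHeartbeats 2000000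
set_option linter.unreachableTactic false
set_option linter.unusedTactic false


noncomputable section
open scoped Classical
open Finset

variable {V : Type*} [Fintype V] [DecidableEq V]

/-- A pmf on a finite family `Γ` of edge sets. -/
def IsPmf (Γ : Finset (Finset (Sym2 V))) (μ : Finset (Sym2 V) → ℝ) : Prop :=
  (∀ γ, 0 ≤ μ γ) ∧ (∀ γ, γ ∉ Γ → μ γ = 0) ∧ ∑ γ ∈ Γ, μ γ = 1

/-- Edge usage probability. -/
def eta (Γ : Finset (Finset (Sym2 V))) (μ : Finset (Sym2 V) → ℝ) (e : Sym2 V) : ℝ :=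
  ∑ γ ∈ Γ.filter (fun γ => e ∈ γ), μ γ

/-- Expected overlap. -/
def EO (Γ : Finset (Finset (Sym2 V))) (μ : Finset (Sym2 V) → ℝ) : ℝ :=
  ∑ γ ∈ Γ, ∑ γ' ∈ Γ, ((γ ∩ γ').card : ℝ) * μ γ * μ γ'

/-- Minimum expected overlap. -/
def MEO (Γ : Finset (Finset (Sym2 V))) : ℝ :=
  sInf {x : ℝ | ∃ μ, IsPmf Γ μ ∧ x = EO Γ μ}

/-- The set of spanning trees of `G`, as finsets of edges. -/
def spanningTrees (G : SimpleGraph V) : Finset (Finset (Sym2 V)) :=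
  Finset.univ.filter (fun γ => ↑γ ⊆ G.edgeSet ∧
    (SimpleGraph.fromEdgeSet (↑γ : Set (Sym2 V))).Connected ∧
    γ.card = Fintype.card V - 1)

/-- Edges of `G` with both endpoints in `W`. -/
def edgesWithin (G : SimpleGraph V) (W : Finset V) : Finset (Sym2 V) :=
  G.edgeFinset.filter (fun e => ∀ v ∈ e, v ∈ W)

/-- `γ` is a spanning tree of the subgraph of `G` induced by the vertex set `W`. -/
def IsSpanningTreeOn (G : SimpleGraph V) (W : Finset V) (γ : Finset (Sym2 V)) : Prop :=
  γ ⊆ edgesWithin G W ∧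
    ((SimpleGraph.fromEdgeSet (↑γ : Set (Sym2 V))).induce (↑W : Set V)).Connected ∧
    γ.card = W.card - 1

def spanningTreesOn (G : SimpleGraph V) (W : Finset V) : Finset (Finset (Sym2 V)) :=
  Finset.univ.filter (IsSpanningTreeOn G W)

def Adm (Γ : Finset (Finset (Sym2 V))) (ρ : Sym2 V → ℝ) : Prop :=
  (∀ e, 0 ≤ ρ e) ∧ ∀ γ ∈ Γ, 1 ≤ ∑ e ∈ γ, ρ e

def Mod2 (Eset : Finset (Sym2 V)) (Γ : Finset (Finset (Sym2 V))) : ℝ :=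
  sInf {x : ℝ | ∃ ρ, Adm Γ ρ ∧ x = ∑ e ∈ Eset, (ρ e) ^ 2}

/-- A fair spanning tree. -/
def IsFair (G : SimpleGraph V) (γ : Finset (Sym2 V)) : Prop :=
  ∃ μ, IsPmf (spanningTrees G) μ ∧ EO (spanningTrees G) μ = MEO (spanningTrees G) ∧ 0 < μ γ

def IsFeasiblePartition (G : SimpleGraph V) (P : Finset (Finset V)) : Prop :=
  2 ≤ P.card ∧ (∀ p ∈ P, p.Nonempty) ∧ (∀ v : V, ∃! p, p ∈ P ∧ v ∈ p) ∧
    ∀ p ∈ P, (G.induce (↑p : Set V)).Connected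

/-- The edges of `G` joining distinct parts of the partition `P`. -/
def cutEdges (G : SimpleGraph V) (P : Finset (Finset V)) : Finset (Sym2 V) :=
  G.edgeFinset.filter (fun e => ¬ ∃ p ∈ P, ∀ v ∈ e, v ∈ p)

/-- `G` is homogeneous. -/
def IsHomogeneous (G : SimpleGraph V) : Prop :=
  ∃ μ, IsPmf (spanningTrees G) μ ∧
    ∃ c : ℝ, ∀ e ∈ G.edgeFinset, eta (spanningTrees G) μ e = c

open SimpleGraph

lemma preconn_transfer {G H : SimpleGraph V} (h : ∀ a b, G.Adj a b → H.Reachable a b)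
    {x y : V} (hxy : G.Reachable x y) : H.Reachable x y := by
  obtain ⟨w⟩ := hxy
  induction w with
  | nil => exact Reachable.refl _
  | cons ha _ ih => exact (h _ _ ha).trans ih

lemma delete_nonbridge_connected {G : SimpleGraph V} (h : G.Connected) {x y : V}
    (hadj : G.Adj x y) (hreach : (G \ fromEdgeSet {s(x,y)}).Reachable x y) :
    (G \ fromEdgeSet {s(x,y)}).Connected := by
  rw [connected_iff]
  refine ⟨fun a b => ?_, h.nonempty⟩
  refine preconn_transfer (fun a b hab => ?_) (h.preconnected a b)
  by_cases he : s(a,b) = s(x,y)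
  · rw [Sym2.eq_iff] at he
    rcases he with ⟨rfl, rfl⟩ | ⟨rfl, rfl⟩
    · exact hreach
    · exact hreach.symm
  · exact SimpleGraph.Adj.reachable (by simp [sdiff_adj, hab, fromEdgeSet_adj, he])

lemma conn_card_le {W : Type*} [Fintype W] (G : SimpleGraph W) (h : G.Connected) :
    Fintype.card W ≤ G.edgeSet.ncard + 1 := by
  generalize hn : G.edgeSet.ncard = n
  induction n using Nat.strong_induction_on generalizing G with
  | _ n ih =>
    by_cases hac : G.IsAcyclic
    · have ht : G.IsTree := ⟨h, hac⟩
      have h1 := ht.card_edgeFinset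
      have h2 : G.edgeSet.ncard = G.edgeFinset.card := by
        simp [Set.ncard_eq_toFinset_card', edgeFinset]
      omega
    · rw [isAcyclic_iff_forall_edge_isBridge] at hac
      push_neg at hac
      obtain ⟨e, he, hnb⟩ := hac
      induction e using Sym2.inductionOn with
      | _ x y =>
      rw [isBridge_iff] at hnb
      push_neg at hnb
      have hadj : G.Adj x y := he
      have hre : (G \ fromEdgeSet {s(x,y)}).Reachable x y := hnb
      have hconn := delete_nonbridge_connected h hadj hre
      have hes : (G \ fromEdgeSet {s(x,y)}).edgeSet = G.edgeSet \ {s(x,y)} := by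
        rw [edgeSet_sdiff, edgeSet_fromEdgeSet]
        ext f
        simp only [Set.mem_diff, Set.mem_singleton_iff, Set.mem_setOf_eq]
        constructor
        · rintro ⟨hf, hf2⟩
          refine ⟨hf, fun hc => hf2 ⟨hc, ?_⟩⟩
          subst hc
          exact fun hd => (G.ne_of_adj hadj) (by simpa using hd)
        · rintro ⟨hf, hf2⟩
          exact ⟨hf, fun hc => hf2 hc.1⟩
      have hlt : (G \ fromEdgeSet {s(x,y)}).edgeSet.ncard < n := by
        rw [hes, ← hn]
        refine Set.ncard_lt_ncard ?_ (Set.toFinite _)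
        constructor
        · exact Set.diff_subset
        · intro hc
          exact (hc he).2 rfl
      have := ih _ hlt _ hconn rfl
      omega

lemma fromEdgeSet_erase_eq {γ : Finset (Sym2 V)} {e : Sym2 V} :
    fromEdgeSet (↑(γ.erase e) : Set (Sym2 V)) = (fromEdgeSet (↑γ : Set (Sym2 V))) \ fromEdgeSet {e} := by
  ext a b
  simp only [fromEdgeSet_adj, Finset.coe_erase, Set.mem_diff, Set.mem_singleton_iff,
    sdiff_adj, Finset.mem_coe]
  constructor
  · rintro ⟨⟨h1, h2⟩, h3⟩
    exact ⟨⟨h1, h3⟩, fun hc => h2 hc.1⟩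
  · rintro ⟨⟨h1, h3⟩, h2⟩
    exact ⟨⟨h1, fun hc => h2 ⟨hc, fun hd => h3 (Sym2.mk_isDiag_iff.mp hd)⟩⟩, h3⟩

lemma fromEdgeSet_conn_card_le {s : Finset (Sym2 V)} (h : (fromEdgeSet (↑s : Set (Sym2 V))).Connected) :
    Fintype.card V ≤ s.card + 1 := by
  have h1 := conn_card_le _ h
  have h2 : (fromEdgeSet (↑s : Set (Sym2 V))).edgeSet.ncard ≤ s.card := by
    rw [edgeSet_fromEdgeSet]
    calc ((↑s : Set (Sym2 V)) \ {e | e.IsDiag}).ncard ≤ (↑s : Set (Sym2 V)).ncard :=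
          Set.ncard_le_ncard Set.diff_subset (Set.toFinite _)
      _ = s.card := Set.ncard_coe_finset s
  omega

lemma mem_spanningTrees_iff {G : SimpleGraph V} {γ : Finset (Sym2 V)} :
    γ ∈ spanningTrees G ↔ ↑γ ⊆ G.edgeSet ∧ (fromEdgeSet (↑γ : Set (Sym2 V))).Connected ∧
      γ.card = Fintype.card V - 1 := by
  simp [spanningTrees]

lemma tree_erase_not_reach {G : SimpleGraph V} {γ : Finset (Sym2 V)}
    (hγ : γ ∈ spanningTrees G) {x y : V} (he : s(x,y) ∈ γ) :
    ¬ (fromEdgeSet (↑(γ.erase s(x,y)) : Set (Sym2 V))).Reachable x y := by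
  obtain ⟨hsub, hconn, hcard⟩ := mem_spanningTrees_iff.mp hγ
  intro hre
  have hconn' : (fromEdgeSet (↑(γ.erase s(x,y)) : Set (Sym2 V))).Connected := by
    rw [connected_iff]
    refine ⟨fun a b => preconn_transfer (fun a b hab => ?_) (hconn.preconnected a b),
      hconn.nonempty⟩
    by_cases hab' : s(a,b) = s(x,y)
    · rw [Sym2.eq_iff] at hab'
      rcases hab' with ⟨rfl, rfl⟩ | ⟨rfl, rfl⟩
      · exact hre
      · exact hre.symm
    · refine SimpleGraph.Adj.reachable ?_
      rw [fromEdgeSet_adj] at hab ⊢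
      exact ⟨Finset.mem_coe.mpr (Finset.mem_erase.mpr ⟨hab', Finset.mem_coe.mp hab.1⟩), hab.2⟩
  have h1 := fromEdgeSet_conn_card_le hconn'
  have h2 : (γ.erase s(x,y)).card = γ.card - 1 := Finset.card_erase_of_mem he
  have h3 : 1 ≤ γ.card := Finset.card_pos.mpr ⟨_, he⟩
  omega

lemma tree_erase_dichotomy {G : SimpleGraph V} {γ : Finset (Sym2 V)}
    (hγ : γ ∈ spanningTrees G) {x y : V} (he : s(x,y) ∈ γ) (a : V) :
    (fromEdgeSet (↑(γ.erase s(x,y)) : Set (Sym2 V))).Reachable x a ∨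
      (fromEdgeSet (↑(γ.erase s(x,y)) : Set (Sym2 V))).Reachable y a := by
  obtain ⟨hsub, hconn, hcard⟩ := mem_spanningTrees_iff.mp hγ
  obtain ⟨w⟩ := hconn.preconnected x a
  set R := fromEdgeSet (↑(γ.erase s(x,y)) : Set (Sym2 V)) with hR
  have key : ∀ {b c : V} (_ : (fromEdgeSet (↑γ : Set (Sym2 V))).Walk b c),
      (R.Reachable x b ∨ R.Reachable y b) → (R.Reachable x c ∨ R.Reachable y c) := by
    intro b c w
    induction w with
    | nil => exact id
    | @cons u' v' z hadj p ih =>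
      intro hu
      apply ih
      by_cases huv : s(u',v') = s(x,y)
      · rw [Sym2.eq_iff] at huv
        rcases huv with ⟨rfl, rfl⟩ | ⟨rfl, rfl⟩
        · right; exact Reachable.refl _
        · left; exact Reachable.refl _
      · have hadj' : R.Adj u' v' := by
          rw [hR, fromEdgeSet_adj]
          have h1 := ((fromEdgeSet_adj _).mp hadj)
          exact ⟨Finset.mem_coe.mpr (Finset.mem_erase.mpr ⟨huv, Finset.mem_coe.mp h1.1⟩), h1.2⟩
        rcases hu with h | h
        · left; exact h.trans hadj'.reachable
        · right; exact h.trans hadj'.reachable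
  exact key w (Or.inl (Reachable.refl _))

lemma swap_mem_spanningTrees {G : SimpleGraph V} {γ : Finset (Sym2 V)}
    (hγ : γ ∈ spanningTrees G) {x y u v : V} (he : s(x,y) ∈ γ)
    (hf : s(u,v) ∈ G.edgeSet) (hfγ : s(u,v) ∉ γ)
    (hru : (fromEdgeSet (↑(γ.erase s(x,y)) : Set (Sym2 V))).Reachable x u)
    (hrv : (fromEdgeSet (↑(γ.erase s(x,y)) : Set (Sym2 V))).Reachable y v) :
    insert s(u,v) (γ.erase s(x,y)) ∈ spanningTrees G := by
  obtain ⟨hsub, hconn, hcard⟩ := mem_spanningTrees_iff.mp hγ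
  have huv : u ≠ v := (G.mem_edgeSet.mp hf).ne
  have hfe : s(u,v) ∉ γ.erase s(x,y) := fun hc => hfγ (Finset.mem_of_mem_erase hc)
  have hmono : (fromEdgeSet (↑(γ.erase s(x,y)) : Set (Sym2 V))) ≤
      fromEdgeSet (↑(insert s(u,v) (γ.erase s(x,y))) : Set (Sym2 V)) := by
    apply fromEdgeSet_mono
    intro z hz
    exact Finset.mem_coe.mpr (Finset.mem_insert_of_mem (Finset.mem_coe.mp hz))
  rw [mem_spanningTrees_iff]
  refine ⟨?_, ?_, ?_⟩
  · rw [Finset.coe_insert]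
    refine Set.insert_subset hf ?_
    intro z hz
    exact hsub (Finset.mem_coe.mpr (Finset.mem_of_mem_erase (Finset.mem_coe.mp hz)))
  · rw [connected_iff]
    refine ⟨fun a b => preconn_transfer (fun a b hab => ?_) (hconn.preconnected a b),
      hconn.nonempty⟩
    by_cases hab' : s(a,b) = s(x,y)
    · have hkey : (fromEdgeSet (↑(insert s(u,v) (γ.erase s(x,y))) : Set (Sym2 V))).Reachable x y := by
        have h1 := hru.mono hmono
        have h2 := (hrv.mono hmono).symm
        have h3 : (fromEdgeSet (↑(insert s(u,v) (γ.erase s(x,y))) : Set (Sym2 V))).Adj u v := by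
          rw [fromEdgeSet_adj]
          exact ⟨Finset.mem_coe.mpr (Finset.mem_insert_self _ _), huv⟩
        exact (h1.trans h3.reachable).trans h2
      rw [Sym2.eq_iff] at hab'
      rcases hab' with ⟨rfl, rfl⟩ | ⟨rfl, rfl⟩
      · exact hkey
      · exact hkey.symm
    · refine SimpleGraph.Adj.reachable ?_
      rw [fromEdgeSet_adj] at hab ⊢
      refine ⟨Finset.mem_coe.mpr (Finset.mem_insert_of_mem
        (Finset.mem_erase.mpr ⟨hab', Finset.mem_coe.mp hab.1⟩)), hab.2⟩
  · rw [Finset.card_insert_of_notMem hfe, Finset.card_erase_of_mem he]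
    have h3 : 1 ≤ γ.card := Finset.card_pos.mpr ⟨_, he⟩
    omega

lemma spanningTrees_isAcyclic {G : SimpleGraph V} {γ : Finset (Sym2 V)}
    (hγ : γ ∈ spanningTrees G) : (fromEdgeSet (↑γ : Set (Sym2 V))).IsAcyclic := by
  by_contra hac
  rw [isAcyclic_iff_forall_edge_isBridge] at hac
  push_neg at hac
  obtain ⟨e, he, hnb⟩ := hac
  induction e using Sym2.inductionOn with
  | _ x y =>
  rw [isBridge_iff] at hnb
  push_neg at hnb
  have hadj : (fromEdgeSet (↑γ : Set (Sym2 V))).Adj x y := he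
  have hre : ((fromEdgeSet (↑γ : Set (Sym2 V))) \ fromEdgeSet {s(x,y)}).Reachable x y := hnb
  rw [← fromEdgeSet_erase_eq] at hre
  exact tree_erase_not_reach hγ (Finset.mem_coe.mp ((fromEdgeSet_adj _).mp hadj).1) hre

lemma exists_erase_not_reach {G : SimpleGraph V} {γ : Finset (Sym2 V)}
    (hγ : γ ∈ spanningTrees G) {a b : V} (S : Finset (Sym2 V))
    (hnr : ¬ (fromEdgeSet (↑(γ \ S) : Set (Sym2 V))).Reachable a b) :
    ∃ e ∈ S, ¬ (fromEdgeSet (↑(γ.erase e) : Set (Sym2 V))).Reachable a b := by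
  by_contra hc
  push_neg at hc
  apply hnr
  obtain ⟨hsub, hconn, hcard⟩ := mem_spanningTrees_iff.mp hγ
  have hac := spanningTrees_isAcyclic hγ
  obtain ⟨w⟩ := hconn.preconnected a b
  set p := w.bypass with hp
  have hpp : p.IsPath := w.bypass_isPath
  have hes : ∀ e ∈ S, e ∉ p.edges := by
    intro e heS hep
    obtain ⟨w'⟩ := hc e heS
    have hsubE : ∀ f ∈ w'.edges, f ∈ (fromEdgeSet (↑γ : Set (Sym2 V))).edgeSet := by
      intro f hf
      have h1 := w'.edges_subset_edgeSet hf
      rw [edgeSet_fromEdgeSet] at h1 ⊢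
      exact ⟨Finset.mem_coe.mpr (Finset.mem_of_mem_erase (Finset.mem_coe.mp h1.1)), h1.2⟩
    set q := (w'.transfer _ hsubE).bypass with hq
    have hqp : q.IsPath := (w'.transfer _ hsubE).bypass_isPath
    have heq : p = q := by
      have := hac.path_unique ⟨p, hpp⟩ ⟨q, hqp⟩
      exact congrArg Subtype.val this
    have h2 : e ∈ w'.edges := by
      have h3 : q.edges ⊆ (w'.transfer _ hsubE).edges := Walk.edges_bypass_subset _
      rw [Walk.edges_transfer] at h3
      exact h3 (heq ▸ hep)
    have h4 := w'.edges_subset_edgeSet h2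
    rw [edgeSet_fromEdgeSet] at h4
    have h5 := Finset.mem_coe.mp h4.1
    exact (Finset.ne_of_mem_erase h5) rfl
  have hsubE2 : ∀ f ∈ p.edges, f ∈ (fromEdgeSet (↑(γ \ S) : Set (Sym2 V))).edgeSet := by
    intro f hf
    have h1 := p.edges_subset_edgeSet hf
    rw [edgeSet_fromEdgeSet] at h1 ⊢
    refine ⟨Finset.mem_coe.mpr (Finset.mem_sdiff.mpr ⟨Finset.mem_coe.mp h1.1, ?_⟩), h1.2⟩
    intro hfS
    exact hes f hfS hf
  exact (p.transfer _ hsubE2).reachable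

lemma exchange_step {G : SimpleGraph V} {γ : Finset (Sym2 V)}
    (hγ : γ ∈ spanningTrees G) {u v : V}
    (hf : s(u,v) ∈ G.edgeSet) (hfγ : s(u,v) ∉ γ) (S : Finset (Sym2 V))
    (hnr : ¬ (fromEdgeSet (↑(γ \ S) : Set (Sym2 V))).Reachable u v) :
    ∃ e ∈ S ∩ γ, insert s(u,v) (γ.erase e) ∈ spanningTrees G := by
  obtain ⟨e, heS, hne⟩ := exists_erase_not_reach hγ S hnr
  have heγ : e ∈ γ := by
    by_contra hc
    rw [Finset.erase_eq_of_notMem hc] at hne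
    exact hne ((mem_spanningTrees_iff.mp hγ).2.1.preconnected u v)
  induction e using Sym2.inductionOn with
  | _ x y =>
  have hd := tree_erase_dichotomy hγ heγ
  rcases hd u with hxu | hyu
  · rcases hd v with hxv | hyv
    · exact absurd (hxu.symm.trans hxv) hne
    · exact ⟨s(x,y), Finset.mem_inter.mpr ⟨heS, heγ⟩,
        swap_mem_spanningTrees hγ heγ hf hfγ hxu hyv⟩
  · rcases hd v with hxv | hyv
    · have heγ' : s(y,x) ∈ γ := by rwa [Sym2.eq_swap]
      have hkey := swap_mem_spanningTrees hγ heγ' hf hfγ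
        (by rwa [show s(y,x) = s(x,y) from Sym2.eq_swap]) 
        (by rwa [show s(y,x) = s(x,y) from Sym2.eq_swap])
      refine ⟨s(x,y), Finset.mem_inter.mpr ⟨heS, heγ⟩, ?_⟩
      rwa [show s(x,y) = s(y,x) from Sym2.eq_swap]
    · exact absurd (hyu.symm.trans hyv) hne

lemma exists_crossing {G : SimpleGraph V} (P : V → Prop) {x y : V} (w : G.Walk x y) :
    P x → ¬ P y →
    ∃ a b, G.Adj a b ∧ G.Reachable x a ∧ P a ∧ ¬ P b := by
  induction w with
  | nil => intro hx hy; exact absurd hx hy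
  | @cons u v z ha p ih =>
    intro hx hy
    by_cases hv : P v
    · obtain ⟨a, b, h1, h2, h3, h4⟩ := ih hv hy
      exact ⟨a, b, h1, ha.reachable.trans h2, h3, h4⟩
    · exact ⟨_, _, ha, Reachable.refl _, hx, hv⟩

lemma reach_closed_transfer {H H' : SimpleGraph V} {W : V → Prop}
    (h : ∀ x y, H.Adj x y → W x → W y ∧ H'.Adj x y) {a b : V}
    (hr : H.Reachable a b) (ha : W a) : H'.Reachable a b ∧ W b := by
  obtain ⟨w⟩ := hr
  induction w with
  | nil => exact ⟨Reachable.refl _, ha⟩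
  | @cons u v z hadj p ih =>
    obtain ⟨hWv, hadj'⟩ := h _ _ hadj ha
    obtain ⟨hre, hWb⟩ := ih hWv
    exact ⟨hadj'.reachable.trans hre, hWb⟩

lemma induce_reach {H : SimpleGraph V} {W : Set V}
    (hcl : ∀ x y, H.Adj x y → x ∈ W → y ∈ W) {a b : V}
    (hr : H.Reachable a b) (ha : a ∈ W) :
    ∃ (hb : b ∈ W), (H.induce W).Reachable ⟨a, ha⟩ ⟨b, hb⟩ := by
  obtain ⟨w⟩ := hr
  induction w with
  | nil => exact ⟨ha, Reachable.refl _⟩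
  | @cons u v z hadj p ih =>
    have hv : v ∈ W := hcl _ _ hadj ha
    obtain ⟨hb, hre⟩ := ih hv
    refine ⟨hb, Reachable.trans ?_ hre⟩
    exact SimpleGraph.Adj.reachable (by simpa using hadj)

lemma eta_eq_sum_ite (Γ : Finset (Finset (Sym2 V))) (μ : Finset (Sym2 V) → ℝ) (e : Sym2 V) :
    eta Γ μ e = ∑ γ ∈ Γ, if e ∈ γ then μ γ else 0 :=
  Finset.sum_filter _ _

lemma card_inter_cast (E : Finset (Sym2 V)) {γ γ' : Finset (Sym2 V)} (hγ : γ ⊆ E) :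
    ((γ ∩ γ').card : ℝ) =
      ∑ e ∈ E, (if e ∈ γ then (1:ℝ) else 0) * (if e ∈ γ' then (1:ℝ) else 0) := by
  have h1 : γ ∩ γ' = E.filter (fun e => e ∈ γ ∧ e ∈ γ') := by
    ext e
    simp only [Finset.mem_inter, Finset.mem_filter]
    exact ⟨fun ⟨h1, h2⟩ => ⟨hγ h1, h1, h2⟩, fun ⟨_, h⟩ => h⟩
  rw [h1, Finset.card_filter]
  push_cast
  refine Finset.sum_congr rfl fun e _ => ?_
  by_cases h1 : e ∈ γ <;> by_cases h2 : e ∈ γ' <;> simp [h1, h2]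

lemma EO_eq_sum_sq (E : Finset (Sym2 V)) (Γ : Finset (Finset (Sym2 V)))
    (hΓ : ∀ γ ∈ Γ, γ ⊆ E) (μ : Finset (Sym2 V) → ℝ) :
    EO Γ μ = ∑ e ∈ E, (eta Γ μ e)^2 := by
  unfold EO
  have step : ∀ γ ∈ Γ, ∑ γ' ∈ Γ, ((γ ∩ γ').card : ℝ) * μ γ * μ γ' =
      ∑ e ∈ E, ∑ γ' ∈ Γ, (if e ∈ γ then μ γ else 0) * (if e ∈ γ' then μ γ' else 0) := by
    intro γ hγ
    rw [Finset.sum_comm]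
    refine Finset.sum_congr rfl fun γ' _ => ?_
    rw [card_inter_cast E (hΓ γ hγ), Finset.sum_mul, Finset.sum_mul]
    refine Finset.sum_congr rfl fun e _ => ?_
    by_cases h1 : e ∈ γ <;> by_cases h2 : e ∈ γ' <;> simp [h1, h2] <;> ring
  rw [Finset.sum_congr rfl step, Finset.sum_comm]
  refine Finset.sum_congr rfl fun e _ => ?_
  rw [eta_eq_sum_ite, sq, Finset.sum_mul_sum]

lemma sum_eta (E : Finset (Sym2 V)) (Γ : Finset (Finset (Sym2 V)))
    (hΓ : ∀ γ ∈ Γ, γ ⊆ E) (μ : Finset (Sym2 V) → ℝ) (n : ℕ)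
    (hcard : ∀ γ ∈ Γ, γ.card = n) (hsum : ∑ γ ∈ Γ, μ γ = 1) :
    ∑ e ∈ E, eta Γ μ e = n := by
  have : ∀ e ∈ E, eta Γ μ e = ∑ γ ∈ Γ, if e ∈ γ then μ γ else 0 :=
    fun e _ => eta_eq_sum_ite Γ μ e
  rw [Finset.sum_congr rfl this, Finset.sum_comm]
  have step : ∀ γ ∈ Γ, ∑ e ∈ E, (if e ∈ γ then μ γ else 0) = n * μ γ := by
    intro γ hγ
    rw [Finset.sum_ite_mem, Finset.inter_eq_right.mpr (hΓ γ hγ), Finset.sum_const,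
      nsmul_eq_mul, hcard γ hγ]
  rw [Finset.sum_congr rfl step, ← Finset.mul_sum, hsum, mul_one]

lemma eta_nonneg {Γ : Finset (Finset (Sym2 V))} {μ} (hμ : IsPmf Γ μ) (e : Sym2 V) :
    0 ≤ eta Γ μ e :=
  Finset.sum_nonneg fun γ _ => hμ.1 γ

lemma exists_pos_tree {Γ : Finset (Finset (Sym2 V))} {μ} (hμ : IsPmf Γ μ) {e : Sym2 V}
    (h : 0 < eta Γ μ e) : ∃ γ ∈ Γ, e ∈ γ ∧ 0 < μ γ := by
  obtain ⟨γ, hγ, hne⟩ := Finset.exists_ne_zero_of_sum_ne_zero (by positivity : eta Γ μ e ≠ 0)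
  rw [Finset.mem_filter] at hγ
  exact ⟨γ, hγ.1, hγ.2, lt_of_le_of_ne (hμ.1 γ) (Ne.symm hne)⟩

lemma EO_nonneg {Γ : Finset (Finset (Sym2 V))} {μ} (hμ : IsPmf Γ μ) : 0 ≤ EO Γ μ := by
  refine Finset.sum_nonneg fun γ _ => Finset.sum_nonneg fun γ' _ => ?_
  have := hμ.1 γ; have := hμ.1 γ'
  positivity

lemma MEO_le {Γ : Finset (Finset (Sym2 V))} {ν} (hν : IsPmf Γ ν) : MEO Γ ≤ EO Γ ν := by
  refine csInf_le ⟨0, ?_⟩ ⟨ν, hν, rfl⟩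
  rintro x ⟨μ', hμ', rfl⟩
  exact EO_nonneg hμ'

lemma no_improving_swap (E : Finset (Sym2 V)) {Γ : Finset (Finset (Sym2 V))}
    (hΓE : ∀ γ ∈ Γ, γ ⊆ E) {μ} (hμ : IsPmf Γ μ)
    (hopt : EO Γ μ = MEO Γ) {γ : Finset (Sym2 V)} {e f : Sym2 V}
    (hγ : γ ∈ Γ) (hpos : 0 < μ γ) (he : e ∈ γ) (hf : f ∈ E) (hfγ : f ∉ γ)
    (hγ' : insert f (γ.erase e) ∈ Γ) (hlt : eta Γ μ f < eta Γ μ e) : False := by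
  set γ' := insert f (γ.erase e) with hγ'def
  have hne : γ' ≠ γ := fun h => hfγ (h ▸ Finset.mem_insert_self f _)
  have hef : e ≠ f := fun h => hfγ (h ▸ he)
  set a := eta Γ μ e with ha
  set b := eta Γ μ f with hb
  set ε := min (μ γ) ((a - b)/2) with hε
  have hε0 : 0 < ε := lt_min hpos (by linarith)
  have hεμ : ε ≤ μ γ := min_le_left _ _
  have hεab : ε ≤ (a - b)/2 := min_le_right _ _
  set ν := fun t => μ t + (if t = γ' then ε else 0) - (if t = γ then ε else 0) with hν
  have hν_pmf : IsPmf Γ ν := by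
    refine ⟨fun t => ?_, fun t ht => ?_, ?_⟩
    · simp only [hν]
      have hμt := hμ.1 t
      by_cases h1 : t = γ' <;> by_cases h2 : t = γ
      · rw [if_pos h1, if_pos h2]; linarith
      · rw [if_pos h1, if_neg h2]; linarith
      · rw [if_neg h1, if_pos h2, h2]; linarith [hεμ]
      · rw [if_neg h1, if_neg h2]; linarith
    · have h1 : t ≠ γ' := fun h => ht (h ▸ hγ')
      have h2 : t ≠ γ := fun h => ht (h ▸ hγ)
      simp only [hν, if_neg h1, if_neg h2, hμ.2.1 t ht]
      ring
    · simp only [hν]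
      rw [Finset.sum_sub_distrib, Finset.sum_add_distrib, Finset.sum_ite_eq' Γ γ' (fun _ => ε),
        Finset.sum_ite_eq' Γ γ (fun _ => ε), if_pos hγ', if_pos hγ, hμ.2.2]
      ring
  have heta : ∀ g, eta Γ ν g =
      eta Γ μ g + (if g ∈ γ' then ε else 0) - (if g ∈ γ then ε else 0) := by
    intro g
    unfold eta
    simp only [hν]
    rw [Finset.sum_sub_distrib, Finset.sum_add_distrib,
      Finset.sum_ite_eq' _ γ' (fun _ => ε), Finset.sum_ite_eq' _ γ (fun _ => ε)]
    simp only [Finset.mem_filter, hγ', hγ, true_and]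
  have hetae : eta Γ ν e = a - ε := by
    rw [heta e, if_pos he, if_neg]
    · ring
    · simp only [hγ'def, Finset.mem_insert, Finset.mem_erase]
      push_neg
      exact ⟨hef, fun h _ => (h rfl).elim⟩
  have hetaf : eta Γ ν f = b + ε := by
    rw [heta f, if_neg hfγ, if_pos (Finset.mem_insert_self f _)]
    ring
  have hetao : ∀ g, g ≠ e → g ≠ f → eta Γ ν g = eta Γ μ g := by
    intro g hge hgf
    rw [heta g]
    by_cases h : g ∈ γ
    · have h' : g ∈ γ' := by
        rw [hγ'def]
        exact Finset.mem_insert_of_mem (Finset.mem_erase.mpr ⟨hge, h⟩)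
      rw [if_pos h', if_pos h]; ring
    · have h' : g ∉ γ' := by
        rw [hγ'def]
        simp only [Finset.mem_insert, Finset.mem_erase]
        push_neg
        exact ⟨hgf, fun _ => h⟩
      rw [if_neg h', if_neg h]; ring
  have hEe : e ∈ E := hΓE γ hγ he
  have hEO : EO Γ ν < EO Γ μ := by
    rw [EO_eq_sum_sq E Γ hΓE, EO_eq_sum_sq E Γ hΓE, ← sub_neg, ← Finset.sum_sub_distrib]
    have hzero : ∀ g ∈ E, g ∉ ({e, f} : Finset (Sym2 V)) →
        (eta Γ ν g)^2 - (eta Γ μ g)^2 = 0 := by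
      intro g _ hg
      simp only [Finset.mem_insert, Finset.mem_singleton] at hg
      push_neg at hg
      rw [hetao g hg.1 hg.2]
      ring
    rw [← Finset.sum_subset (Finset.insert_subset hEe (Finset.singleton_subset_iff.mpr hf))
      hzero]
    rw [Finset.sum_pair hef, hetae, hetaf]
    nlinarith
  have := MEO_le hν_pmf
  rw [← hopt] at this
  linarith

lemma quotient_reach {β : Type*} {T : SimpleGraph V} {HQ : SimpleGraph β} (c : V → β)
    (h : ∀ x y, T.Adj x y → c x = c y ∨ HQ.Adj (c x) (c y)) {a b : V}
    (hr : T.Reachable a b) : HQ.Reachable (c a) (c b) := by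
  obtain ⟨w⟩ := hr
  induction w with
  | nil => exact Reachable.refl _
  | @cons u v z hadj p ih =>
    rcases h _ _ hadj with heq | hadj'
    · exact heq ▸ ih
    · exact hadj'.reachable.trans ih

/-- relative edge count bound -/
lemma card_le_of_reach_within {s : Finset (Sym2 V)} {W : Finset V}
    (hend : ∀ e ∈ s, ∀ x ∈ e, x ∈ W) (hW : W.Nonempty)
    (hreach : ∀ u ∈ W, ∀ v ∈ W, (fromEdgeSet (↑s : Set (Sym2 V))).Reachable u v) :
    W.card ≤ s.card + 1 := by
  set H := fromEdgeSet (↑s : Set (Sym2 V)) with hH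
  have hcl : ∀ x y, H.Adj x y → x ∈ (↑W : Set V) → y ∈ (↑W : Set V) := by
    intro x y hadj _
    have h1 := (fromEdgeSet_adj _).mp hadj
    exact hend _ (Finset.mem_coe.mp h1.1) y (Sym2.mem_mk_right x y)
  have hconn : (H.induce (↑W : Set V)).Connected := by
    rw [connected_iff]
    constructor
    · rintro ⟨u, hu⟩ ⟨v, hv⟩
      obtain ⟨hb, hre⟩ := induce_reach hcl (hreach u hu v hv) hu
      exact hre
    · obtain ⟨v, hv⟩ := hW
      exact ⟨⟨v, hv⟩⟩
  have h1 := conn_card_le _ hconn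
  have hcardW : Fintype.card (↑W : Set V) = W.card := by
    simp
  have h2 : (H.induce (↑W : Set V)).edgeSet.ncard ≤ s.card := by
    have himg : Sym2.map (Subtype.val : (↑W : Set V) → V) '' (H.induce (↑W : Set V)).edgeSet
        ⊆ (↑s : Set (Sym2 V)) := by
      rintro e ⟨e', he', rfl⟩
      induction e' using Sym2.inductionOn with
      | _ x y =>
        have : H.Adj x.1 y.1 := he'
        exact Finset.mem_coe.mpr (Finset.mem_coe.mp ((fromEdgeSet_adj _).mp this).1)
    have hinj : Function.Injective (Sym2.map (Subtype.val : (↑W : Set V) → V)) :=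
      Sym2.map.injective Subtype.val_injective
    calc (H.induce (↑W : Set V)).edgeSet.ncard
        = (Sym2.map (Subtype.val : (↑W : Set V) → V) '' (H.induce (↑W : Set V)).edgeSet).ncard :=
          (Set.ncard_image_of_injective _ hinj).symm
      _ ≤ ((↑s : Set (Sym2 V))).ncard := Set.ncard_le_ncard himg (Set.toFinite _)
      _ = s.card := Set.ncard_coe_finset s
  omega

lemma tree_cut_card_ge {G : SimpleGraph V} {γ : Finset (Sym2 V)} (hγ : γ ∈ spanningTrees G)
    {Q : Finset (Finset V)} (hQ : IsFeasiblePartition G Q) :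
    Q.card - 1 ≤ (γ ∩ cutEdges G Q).card := by
  obtain ⟨hk, hne, huniq, _⟩ := hQ
  obtain ⟨hsub, hconn, hcard⟩ := mem_spanningTrees_iff.mp hγ
  choose c hc1 hc2 using huniq
  have hcu : ∀ (v : V) (p : Finset V), p ∈ Q → v ∈ p → c v = p :=
    fun v p hp hv => (hc2 v p ⟨hp, hv⟩).symm
  set β := {p : Finset V // p ∈ Q} with hβ
  set GQ : SimpleGraph β :=
    { Adj := fun p q => p ≠ q ∧ ∃ x y, s(x,y) ∈ γ ∩ cutEdges G Q ∧ x ∈ p.1 ∧ y ∈ q.1,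
      symm := ⟨by
        rintro p q ⟨h1, x, y, hxy, hx, hy⟩
        exact ⟨h1.symm, y, x, by rwa [Sym2.eq_swap], hy, hx⟩⟩,
      loopless := ⟨fun p h => h.1 rfl⟩ } with hGQ
  have hproj : ∀ v : V, c v ∈ Q := fun v => (hc1 v).1
  set cm : V → β := fun v => ⟨c v, hproj v⟩ with hcm
  have hadjQ : ∀ x y, (fromEdgeSet (↑γ : Set (Sym2 V))).Adj x y →
      cm x = cm y ∨ GQ.Adj (cm x) (cm y) := by
    intro x y hadj
    have hxyγ : s(x,y) ∈ γ := Finset.mem_coe.mp ((fromEdgeSet_adj _).mp hadj).1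
    by_cases hcase : ∃ p ∈ Q, ∀ v ∈ s(x,y), v ∈ p
    · obtain ⟨p, hp, hv⟩ := hcase
      left
      have h1 : c x = p := hcu x p hp (hv x (Sym2.mem_mk_left x y))
      have h2 : c y = p := hcu y p hp (hv y (Sym2.mem_mk_right x y))
      simp only [hcm]
      exact Subtype.ext (h1.trans h2.symm)
    · right
      have hcut : s(x,y) ∈ cutEdges G Q := by
        rw [cutEdges, Finset.mem_filter]
        exact ⟨mem_edgeFinset.mpr (hsub hxyγ), hcase⟩
      have hne2 : cm x ≠ cm y := by
        intro hc
        apply hcase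
        refine ⟨c x, hproj x, fun v hv => ?_⟩
        rcases Sym2.mem_iff.mp hv with h | h
        · subst h; exact (hc1 v).2
        · subst h
          have h2 : c v = c x := congrArg Subtype.val hc.symm
          exact h2 ▸ (hc1 v).2
      exact ⟨hne2, x, y, Finset.mem_inter.mpr ⟨hxyγ, hcut⟩, (hc1 x).2, (hc1 y).2⟩
  have hGQconn : GQ.Connected := by
    rw [connected_iff]
    constructor
    · rintro ⟨p, hp⟩ ⟨q, hq⟩
      obtain ⟨v, hv⟩ := hne p hp
      obtain ⟨w, hw⟩ := hne q hq
      have h1 : cm v = ⟨p, hp⟩ := Subtype.ext (hcu v p hp hv)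
      have h2 : cm w = ⟨q, hq⟩ := Subtype.ext (hcu w q hq hw)
      rw [← h1, ← h2]
      exact quotient_reach cm hadjQ (hconn.preconnected v w)
    · have : 0 < Q.card := by omega
      obtain ⟨p, hp⟩ := Finset.card_pos.mp this
      exact ⟨⟨p, hp⟩⟩
  have h1 := conn_card_le GQ hGQconn
  have hcardβ : Fintype.card β = Q.card := Fintype.card_coe Q
  have h2 : GQ.edgeSet.ncard ≤ (γ ∩ cutEdges G Q).card := by
    have himg : GQ.edgeSet ⊆ Sym2.map cm '' (↑(γ ∩ cutEdges G Q) : Set (Sym2 V)) := by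
      intro e he
      induction e using Sym2.inductionOn with
      | _ p q =>
        obtain ⟨hne', x, y, hxy, hx, hy⟩ := (GQ.mem_edgeSet).mp he
        refine ⟨s(x,y), Finset.mem_coe.mpr hxy, ?_⟩
        rw [Sym2.map_pair_eq]
        have h1 : cm x = p := Subtype.ext (hcu x p.1 p.2 hx)
        have h2 : cm y = q := Subtype.ext (hcu y q.1 q.2 hy)
        rw [h1, h2]
    calc GQ.edgeSet.ncard ≤ (Sym2.map cm '' (↑(γ ∩ cutEdges G Q) : Set (Sym2 V))).ncard :=
          Set.ncard_le_ncard himg (Set.toFinite _)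
      _ ≤ (↑(γ ∩ cutEdges G Q) : Set (Sym2 V)).ncard := Set.ncard_image_le (Set.toFinite _)
      _ = (γ ∩ cutEdges G Q).card := Set.ncard_coe_finset _
  omega

/-- the set of edges of maximal optimal usage is the cut set of a
feasible partition `P*` which every optimal tree crosses exactly `k_{P*} - 1`
times, whose cut usage value is `K = (k_{P*}-1)/|E_{P*}|`, and which minimizes
the weight `|E_P|/(k_P-1)` among all feasible partitions. -/

theorem max_usage_edges_form_min_feasible_partition
    {V : Type*} [Fintype V] [DecidableEq V]
    (G : SimpleGraph V) (hG : G.Connected) (hE : G.edgeFinset.Nonempty)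
    (μ : Finset (Sym2 V) → ℝ) (hμ : IsPmf (spanningTrees G) μ)
    (hopt : EO (spanningTrees G) μ = MEO (spanningTrees G))
    (K : ℝ)
    (hKmax : ∀ e ∈ G.edgeFinset, eta (spanningTrees G) μ e ≤ K)
    (hKmem : ∃ e ∈ G.edgeFinset, eta (spanningTrees G) μ e = K) :
    ∃ P : Finset (Finset V), IsFeasiblePartition G P ∧
      cutEdges G P = G.edgeFinset.filter (fun e => eta (spanningTrees G) μ e = K) ∧
      (∀ γ ∈ spanningTrees G, 0 < μ γ → (γ ∩ cutEdges G P).card = P.card - 1) ∧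
      K = ((P.card : ℝ) - 1) / ((cutEdges G P).card : ℝ) ∧
      ∀ Q : Finset (Finset V), IsFeasiblePartition G Q →
        ((cutEdges G P).card : ℝ) / ((P.card : ℝ) - 1) ≤
          ((cutEdges G Q).card : ℝ) / ((Q.card : ℝ) - 1) := by
    classical
  set E := G.edgeFinset with hE_def
  set Γ := spanningTrees G with hΓ_def
  set η := eta Γ μ with hη_def
  have hΓE : ∀ γ ∈ Γ, γ ⊆ E := by
    intro γ hγ e he
    exact mem_edgeFinset.mpr ((mem_spanningTrees_iff.mp hγ).1 he)
  have hcardγ : ∀ γ ∈ Γ, γ.card = Fintype.card V - 1 :=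
    fun γ hγ => (mem_spanningTrees_iff.mp hγ).2.2
  obtain ⟨e₀, he₀E, he₀K⟩ := hKmem
  have hn2 : 2 ≤ Fintype.card V := by
    obtain ⟨e₁, he₁⟩ := hE
    have he₁' : e₁ ∈ G.edgeSet := mem_edgeFinset.mp he₁
    revert he₁'
    induction e₁ using Sym2.inductionOn with
    | _ x y =>
      intro h
      exact Fintype.one_lt_card_iff.mpr ⟨x, y, (G.mem_edgeSet.mp h).ne⟩
  have hsume : ∑ e ∈ E, η e = ((Fintype.card V - 1 : ℕ) : ℝ) :=
    sum_eta E Γ hΓE μ _ hcardγ hμ.2.2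
  have hK0 : 0 < K := by
    by_contra hc
    push_neg at hc
    have hzero : ∀ e ∈ E, η e = 0 := fun e he =>
      le_antisymm ((hKmax e he).trans hc) (eta_nonneg hμ e)
    rw [Finset.sum_congr rfl hzero, Finset.sum_const_zero] at hsume
    have : (Fintype.card V - 1 : ℕ) = 0 := by exact_mod_cast hsume.symm
    omega
  set Fset := E.filter (fun e => η e < K) with hFset
  set Fg := fromEdgeSet (↑Fset : Set (Sym2 V)) with hFg
  set cls : V → Finset V := fun v => Finset.univ.filter (fun u => Fg.Reachable v u) with hcls
  have hmemcls : ∀ v u, u ∈ cls v ↔ Fg.Reachable v u := by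
    intro v u; simp [hcls]
  have hself : ∀ v, v ∈ cls v := fun v => (hmemcls v v).mpr (Reachable.refl v)
  have hclseq : ∀ u v, Fg.Reachable u v → cls u = cls v := by
    intro u v h
    ext z
    rw [hmemcls, hmemcls]
    exact ⟨fun hz => h.symm.trans hz, fun hz => h.trans hz⟩
  set P := Finset.univ.image cls with hP
  have app1 : ∀ x y : V, s(x,y) ∈ E → η s(x,y) = K → ¬ Fg.Reachable x y := by
    intro x y hxyE hxyK hreach
    obtain ⟨γ, hγΓ, heγ, hpos⟩ := exists_pos_tree hμ (lt_of_lt_of_eq hK0 hxyK.symm)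
    have hnr := tree_erase_not_reach hγΓ heγ
    obtain ⟨w⟩ := hreach
    obtain ⟨a, b, hab, hxa, hPa, hPb⟩ := exists_crossing
      (fun z => (fromEdgeSet (↑(γ.erase s(x,y)) : Set (Sym2 V))).Reachable x z) w
      (Reachable.refl x) hnr
    have habF : s(a,b) ∈ Fset := Finset.mem_coe.mp ((fromEdgeSet_adj _).mp hab).1
    have hfE : s(a,b) ∈ E := (Finset.mem_filter.mp habF).1
    have hfK : η s(a,b) < K := (Finset.mem_filter.mp habF).2
    have hfγ : s(a,b) ∉ γ := by
      intro hc
      apply hPb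
      refine hPa.trans (SimpleGraph.Adj.reachable ?_)
      rw [fromEdgeSet_adj]
      refine ⟨Finset.mem_coe.mpr (Finset.mem_erase.mpr ⟨?_, hc⟩), ((fromEdgeSet_adj _).mp hab).2⟩
      intro heq
      rw [heq, hxyK] at hfK
      exact lt_irrefl _ hfK
    have hyb := (tree_erase_dichotomy hγΓ heγ b).resolve_left hPb
    have hmemT := swap_mem_spanningTrees hγΓ heγ (mem_edgeFinset.mp hfE) hfγ hPa hyb
    exact no_improving_swap E hΓE hμ hopt hγΓ hpos heγ hfE hfγ hmemT
      (lt_of_lt_of_eq hfK hxyK.symm)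
  have hcut_mem : ∀ e, e ∈ cutEdges G P ↔ e ∈ E ∧ η e = K := by
    intro e
    induction e using Sym2.inductionOn with
    | _ x y =>
      rw [cutEdges, Finset.mem_filter]
      constructor
      · rintro ⟨heE, hnp⟩
        refine ⟨heE, ?_⟩
        by_contra hne
        have hlt : η s(x,y) < K := lt_of_le_of_ne (hKmax _ heE) hne
        have hFadj : Fg.Adj x y := by
          rw [hFg, fromEdgeSet_adj]
          exact ⟨Finset.mem_coe.mpr (Finset.mem_filter.mpr ⟨heE, hlt⟩),
            (G.mem_edgeSet.mp (mem_edgeFinset.mp heE)).ne⟩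
        apply hnp
        refine ⟨cls x, Finset.mem_image.mpr ⟨x, Finset.mem_univ x, rfl⟩, fun v hv => ?_⟩
        rcases Sym2.mem_iff.mp hv with h | h
        · subst h; exact hself v
        · subst h; exact (hmemcls x v).mpr hFadj.reachable
      · rintro ⟨heE, hK⟩
        refine ⟨heE, ?_⟩
        rintro ⟨p, hpP, hvp⟩
        obtain ⟨w', -, rfl⟩ := Finset.mem_image.mp hpP
        have hx : x ∈ cls w' := hvp x (Sym2.mem_mk_left x y)
        have hy : y ∈ cls w' := hvp y (Sym2.mem_mk_right x y)
        exact app1 x y heE hK (((hmemcls w' x).mp hx).symm.trans ((hmemcls w' y).mp hy))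
  have hex : ∃ x y : V, s(x,y) ∈ E ∧ η s(x,y) = K := by
    revert he₀E he₀K
    induction e₀ using Sym2.inductionOn with
    | _ x y => exact fun h1 h2 => ⟨x, y, h1, h2⟩
  obtain ⟨x₀, y₀, hx₀E, hx₀K⟩ := hex
  have hPcard : 2 ≤ P.card := by
    have hne01 : cls x₀ ≠ cls y₀ := by
      intro hc
      have hy : y₀ ∈ cls x₀ := hc ▸ hself y₀
      exact app1 x₀ y₀ hx₀E hx₀K ((hmemcls x₀ y₀).mp hy)
    exact Finset.one_lt_card.mpr ⟨cls x₀, Finset.mem_image.mpr ⟨x₀, Finset.mem_univ _, rfl⟩,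
      cls y₀, Finset.mem_image.mpr ⟨y₀, Finset.mem_univ _, rfl⟩, hne01⟩
  have hPfeas : IsFeasiblePartition G P := by
    refine ⟨hPcard, ?_, ?_, ?_⟩
    · intro p hp
      obtain ⟨v, -, rfl⟩ := Finset.mem_image.mp hp
      exact ⟨v, hself v⟩
    · intro v
      refine ⟨cls v, ⟨Finset.mem_image.mpr ⟨v, Finset.mem_univ v, rfl⟩, hself v⟩, ?_⟩
      rintro q ⟨hqP, hvq⟩
      obtain ⟨w', -, rfl⟩ := Finset.mem_image.mp hqP
      exact hclseq w' v ((hmemcls w' v).mp hvq)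
    · intro p hp
      obtain ⟨v, -, rfl⟩ := Finset.mem_image.mp hp
      have hFG : Fg ≤ G := by
        intro a b hab
        obtain ⟨h1, h2⟩ := (fromEdgeSet_adj _).mp hab
        exact G.mem_edgeSet.mp (mem_edgeFinset.mp (Finset.mem_filter.mp (Finset.mem_coe.mp h1)).1)
      have hcl : ∀ a b, Fg.Adj a b → a ∈ (↑(cls v) : Set V) → b ∈ (↑(cls v) : Set V) := by
        intro a b hab ha
        have h1 := (hmemcls v a).mp (Finset.mem_coe.mp ha)
        exact Finset.mem_coe.mpr ((hmemcls v b).mpr (h1.trans hab.reachable))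
      rw [connected_iff]
      constructor
      · rintro ⟨a, ha⟩ ⟨b, hb⟩
        have hra := (hmemcls v a).mp (Finset.mem_coe.mp ha)
        have hrb := (hmemcls v b).mp (Finset.mem_coe.mp hb)
        obtain ⟨hb', hre⟩ := induce_reach hcl (hra.symm.trans hrb) ha
        have hre' : (Fg.induce (↑(cls v) : Set V)).Reachable ⟨a, ha⟩ ⟨b, hb⟩ := hre
        refine hre'.mono ?_
        intro p q hpq
        exact hFG hpq
      · exact ⟨⟨v, Finset.mem_coe.mpr (hself v)⟩⟩
  have span : ∀ γ ∈ Γ, 0 < μ γ → ∀ v u w0 : V, u ∈ cls v → w0 ∈ cls v →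
      (fromEdgeSet (↑(γ ∩ edgesWithin G (cls v)) : Set (Sym2 V))).Reachable u w0 := by
    intro γ hγΓ hpos v u w0 hu hw0
    by_contra hnp
    set D := γ ∩ edgesWithin G (cls v) with hD
    set Hin := fromEdgeSet (↑D : Set (Sym2 V)) with hHin
    have hru : Fg.Reachable u w0 := ((hmemcls v u).mp hu).symm.trans ((hmemcls v w0).mp hw0)
    obtain ⟨wk⟩ := hru
    obtain ⟨a, b, hab, hua, hPa, hPb⟩ := exists_crossing (fun z => Hin.Reachable u z) wk
      (Reachable.refl u) hnp
    have haP : a ∈ cls v := (hmemcls v a).mpr (((hmemcls v u).mp hu).trans hua)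
    have hbP : b ∈ cls v := (hmemcls v b).mpr (((hmemcls v a).mp haP).trans hab.reachable)
    have habF : s(a,b) ∈ Fset := Finset.mem_coe.mp ((fromEdgeSet_adj _).mp hab).1
    have hfE : s(a,b) ∈ E := (Finset.mem_filter.mp habF).1
    have hfK : η s(a,b) < K := (Finset.mem_filter.mp habF).2
    have hfW : s(a,b) ∈ edgesWithin G (cls v) := by
      rw [edgesWithin, Finset.mem_filter]
      refine ⟨hfE, fun z hz => ?_⟩
      rcases Sym2.mem_iff.mp hz with h | h
      · subst h; exact haP
      · subst h; exact hbP
    have hfγ : s(a,b) ∉ γ := by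
      intro hc
      apply hPb
      refine hPa.trans (SimpleGraph.Adj.reachable ?_)
      rw [hHin, fromEdgeSet_adj]
      exact ⟨Finset.mem_coe.mpr (Finset.mem_inter.mpr ⟨hc, hfW⟩), ((fromEdgeSet_adj _).mp hab).2⟩
    set S := γ.filter (fun e => η e = K) with hS
    have hnr : ¬ (fromEdgeSet (↑(γ \ S) : Set (Sym2 V))).Reachable a b := by
      intro hre
      have hstep : ∀ z1 z2, (fromEdgeSet (↑(γ \ S) : Set (Sym2 V))).Adj z1 z2 →
          z1 ∈ cls v → z2 ∈ cls v ∧ Hin.Adj z1 z2 := by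
        intro z1 z2 hadj hz1
        obtain ⟨hmem, hne'⟩ := (fromEdgeSet_adj _).mp hadj
        obtain ⟨hz12γ, hz12S⟩ := Finset.mem_sdiff.mp (Finset.mem_coe.mp hmem)
        have hz12E : s(z1,z2) ∈ E := hΓE γ hγΓ hz12γ
        have hz12K : η s(z1,z2) < K :=
          lt_of_le_of_ne (hKmax _ hz12E) (fun hc => hz12S (Finset.mem_filter.mpr ⟨hz12γ, hc⟩))
        have hz12F : Fg.Adj z1 z2 := by
          rw [hFg, fromEdgeSet_adj]
          exact ⟨Finset.mem_coe.mpr (Finset.mem_filter.mpr ⟨hz12E, hz12K⟩), hne'⟩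
        have hz2p : z2 ∈ cls v :=
          (hmemcls v z2).mpr (((hmemcls v z1).mp hz1).trans hz12F.reachable)
        refine ⟨hz2p, ?_⟩
        rw [hHin, fromEdgeSet_adj]
        refine ⟨Finset.mem_coe.mpr (Finset.mem_inter.mpr ⟨hz12γ, ?_⟩), hne'⟩
        rw [edgesWithin, Finset.mem_filter]
        refine ⟨hz12E, fun z hz => ?_⟩
        rcases Sym2.mem_iff.mp hz with h | h
        · subst h; exact hz1
        · subst h; exact hz2p
      have hkey := reach_closed_transfer (fun z1 z2 hadj hz1 => hstep z1 z2 hadj hz1) hre haP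
      exact hPb (hPa.trans hkey.1)
    obtain ⟨e', he'S, hswap⟩ := exchange_step hγΓ (mem_edgeFinset.mp hfE) hfγ S hnr
    obtain ⟨he'S', he'γ⟩ := Finset.mem_inter.mp he'S
    have he'K : η e' = K := (Finset.mem_filter.mp he'S').2
    exact no_improving_swap E hΓE hμ hopt hγΓ hpos he'γ hfE hfγ hswap
      (lt_of_lt_of_eq hfK he'K.symm)
  have hcount : ∀ γ ∈ Γ, 0 < μ γ → (γ ∩ cutEdges G P).card = P.card - 1 := by
    intro γ hγΓ hpos
    set A := γ ∩ cutEdges G P with hA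
    set B : Finset V → Finset (Sym2 V) := fun p => γ ∩ edgesWithin G p with hB
    have hdisj1 : ∀ p ∈ P, Disjoint A (B p) := by
      intro p hp
      rw [Finset.disjoint_left]
      intro e heA heB
      have h1 := (Finset.mem_filter.mp (Finset.mem_inter.mp heA).2).2
      have h2 := Finset.mem_filter.mp (Finset.mem_inter.mp heB).2
      exact h1 ⟨p, hp, h2.2⟩
    have hpartdisj : ∀ p ∈ P, ∀ q ∈ P, p ≠ q → Disjoint p q := by
      intro p hp q hq hne'
      obtain ⟨vp, -, rfl⟩ := Finset.mem_image.mp hp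
      obtain ⟨vq, -, rfl⟩ := Finset.mem_image.mp hq
      rw [Finset.disjoint_left]
      intro z hzp hzq
      exact hne'
        ((hclseq vp z ((hmemcls vp z).mp hzp)).trans (hclseq vq z ((hmemcls vq z).mp hzq)).symm)
    have hdisj2 : ∀ p ∈ P, ∀ q ∈ P, p ≠ q → Disjoint (B p) (B q) := by
      intro p hp q hq hne'
      rw [Finset.disjoint_left]
      intro e hep heq
      have h1 := Finset.mem_filter.mp (Finset.mem_inter.mp hep).2
      have h2 := Finset.mem_filter.mp (Finset.mem_inter.mp heq).2
      have hx1 := h1.2 e.out.1 (Sym2.out_fst_mem e)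
      have hx2 := h2.2 e.out.1 (Sym2.out_fst_mem e)
      exact Finset.disjoint_left.mp (hpartdisj p hp q hq hne') hx1 hx2
    have hunion : γ = A ∪ P.biUnion B := by
      ext e
      constructor
      · intro he
        by_cases hcase : ∃ p ∈ P, ∀ z ∈ e, z ∈ p
        · obtain ⟨p, hp, hz⟩ := hcase
          refine Finset.mem_union_right _ (Finset.mem_biUnion.mpr ⟨p, hp, ?_⟩)
          refine Finset.mem_inter.mpr ⟨he, ?_⟩
          rw [edgesWithin, Finset.mem_filter]
          exact ⟨hΓE γ hγΓ he, hz⟩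
        · refine Finset.mem_union_left _ (Finset.mem_inter.mpr ⟨he, ?_⟩)
          rw [cutEdges, Finset.mem_filter]
          exact ⟨hΓE γ hγΓ he, hcase⟩
      · intro he
        rcases Finset.mem_union.mp he with h | h
        · exact (Finset.mem_inter.mp h).1
        · obtain ⟨p, hp, hmem⟩ := Finset.mem_biUnion.mp h
          exact (Finset.mem_inter.mp hmem).1
    have hcard1 : γ.card = A.card + ∑ p ∈ P, (B p).card := by
      rw [hunion, Finset.card_union_of_disjoint ((Finset.disjoint_biUnion_right _ _ _).mpr hdisj1),
        Finset.card_biUnion hdisj2]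
    have hBcard : ∀ p ∈ P, p.card ≤ (B p).card + 1 := by
      intro p hp
      obtain ⟨v, -, rfl⟩ := Finset.mem_image.mp hp
      refine card_le_of_reach_within ?_ ⟨v, hself v⟩ ?_
      · intro e heB z hz
        exact (Finset.mem_filter.mp (Finset.mem_inter.mp heB).2).2 z hz
      · intro u hu w0 hw0
        exact span γ hγΓ hpos v u w0 hu hw0
    have hsumpart : ∑ p ∈ P, p.card = Fintype.card V := by
      have huniv : P.biUnion id = Finset.univ := by
        ext z
        simp only [Finset.mem_biUnion, Finset.mem_univ, iff_true, id]
        exact ⟨cls z, Finset.mem_image.mpr ⟨z, Finset.mem_univ z, rfl⟩, hself z⟩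
      calc ∑ p ∈ P, p.card = (P.biUnion id).card := (Finset.card_biUnion hpartdisj).symm
        _ = Fintype.card V := by rw [huniv, Finset.card_univ]
    have hAk := tree_cut_card_ge hγΓ hPfeas
    have hBsum : Fintype.card V ≤ ∑ p ∈ P, (B p).card + P.card := by
      calc Fintype.card V = ∑ p ∈ P, p.card := hsumpart.symm
        _ ≤ ∑ p ∈ P, ((B p).card + 1) := Finset.sum_le_sum hBcard
        _ = ∑ p ∈ P, (B p).card + P.card := by
            rw [Finset.sum_add_distrib, Finset.sum_const, smul_eq_mul, mul_one]
    have hγcard := hcardγ γ hγΓ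
    have hAk' : P.card - 1 ≤ A.card := hAk
    omega
  have hswapC : ∀ C : Finset (Sym2 V), C ⊆ E →
      ∑ e ∈ C, η e = ∑ γ ∈ Γ, μ γ * ((γ ∩ C).card : ℝ) := by
    intro C hC
    have h1 : ∀ e ∈ C, η e = ∑ γ ∈ Γ, if e ∈ γ then μ γ else 0 :=
      fun e _ => eta_eq_sum_ite Γ μ e
    rw [Finset.sum_congr rfl h1, Finset.sum_comm]
    refine Finset.sum_congr rfl fun γ hγ => ?_
    rw [Finset.sum_ite_mem, Finset.sum_const, Finset.inter_comm, nsmul_eq_mul, mul_comm]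
  have hcutK : ∀ e ∈ cutEdges G P, η e = K := fun e he => ((hcut_mem e).mp he).2
  have hcutE : cutEdges G P ⊆ E := Finset.filter_subset _ _
  have hcutne : (cutEdges G P).Nonempty := ⟨_, (hcut_mem _).mpr ⟨hx₀E, hx₀K⟩⟩
  have hsumcut : ∑ e ∈ cutEdges G P, η e = K * ((cutEdges G P).card : ℝ) := by
    rw [Finset.sum_congr rfl hcutK, Finset.sum_const, nsmul_eq_mul, mul_comm]
  have hsumcut3 : ∑ γ ∈ Γ, μ γ * ((γ ∩ cutEdges G P).card : ℝ) = ((P.card : ℝ) - 1) := by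
    have h1 : ∀ γ ∈ Γ, μ γ * ((γ ∩ cutEdges G P).card : ℝ) = μ γ * ((P.card : ℝ) - 1) := by
      intro γ hγ
      rcases eq_or_lt_of_le (hμ.1 γ) with h | h
      · rw [← h, zero_mul, zero_mul]
      · rw [hcount γ hγ h]
        congr 1
        rw [Nat.cast_sub (by omega), Nat.cast_one]
    rw [Finset.sum_congr rfl h1, ← Finset.sum_mul, hμ.2.2, one_mul]
  have hcutpos : (0:ℝ) < ((cutEdges G P).card : ℝ) := by
    exact_mod_cast Finset.card_pos.mpr hcutne
  have hKformula : K = ((P.card : ℝ) - 1) / (((cutEdges G P).card : ℕ) : ℝ) := by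
    rw [eq_div_iff (ne_of_gt hcutpos)]
    have := hswapC (cutEdges G P) hcutE
    linarith [hsumcut, hsumcut3, this]
  have hkP1 : (0:ℝ) < (P.card : ℝ) - 1 := by
    have : (2:ℝ) ≤ (P.card : ℝ) := by exact_mod_cast hPcard
    linarith
  refine ⟨P, hPfeas, ?_, ?_, hKformula, ?_⟩
  · ext e
    rw [Finset.mem_filter]
    exact hcut_mem e
  · intro γ hγ hpos
    exact hcount γ hγ hpos
  · intro Q hQ
    have hQ2 := hQ.1
    have hkQ1 : (0:ℝ) < (Q.card : ℝ) - 1 := by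
      have : (2:ℝ) ≤ (Q.card : ℝ) := by exact_mod_cast hQ2
      linarith
    have hQcutE : cutEdges G Q ⊆ E := Finset.filter_subset _ _
    have h1 : ((Q.card : ℝ) - 1) ≤ K * ((cutEdges G Q).card : ℝ) := by
      have hge : ∀ γ ∈ Γ, μ γ * ((Q.card : ℝ) - 1) ≤ μ γ * ((γ ∩ cutEdges G Q).card : ℝ) := by
        intro γ hγ
        refine mul_le_mul_of_nonneg_left ?_ (hμ.1 γ)
        have h2 := tree_cut_card_ge hγ hQ
        have hcast : ((Q.card - 1 : ℕ) : ℝ) ≤ ((γ ∩ cutEdges G Q).card : ℝ) := Nat.cast_le.mpr h2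
        rwa [Nat.cast_sub (by omega), Nat.cast_one] at hcast
      calc ((Q.card:ℝ) - 1) = ∑ γ ∈ Γ, μ γ * ((Q.card:ℝ)-1) := by
            rw [← Finset.sum_mul, hμ.2.2, one_mul]
        _ ≤ ∑ γ ∈ Γ, μ γ * ((γ ∩ cutEdges G Q).card : ℝ) := Finset.sum_le_sum hge
        _ = ∑ e ∈ cutEdges G Q, η e := (hswapC _ hQcutE).symm
        _ ≤ ∑ e ∈ cutEdges G Q, K := Finset.sum_le_sum (fun e he => hKmax e (hQcutE he))
        _ = K * ((cutEdges G Q).card : ℝ) := by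
            rw [Finset.sum_const, nsmul_eq_mul, mul_comm]
    have hKP : K * (((cutEdges G P).card : ℕ) : ℝ) = (P.card:ℝ) - 1 := by
      rw [hKformula]
      exact div_mul_cancel₀ _ (ne_of_gt hcutpos)
    rw [div_le_div_iff₀ hkP1 hkQ1]
    nlinarith [mul_le_mul_of_nonneg_left h1 hcutpos.le, hKP, hK0]
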